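/- arXiv:2405.08595 — 4 statements merged into one kernel-verified Lean document; each statement's English description precedes it below -/
import Mathlib

section
/- Let J be a finite set of jobs with release times r_j, deadlines d_j, processing times p_j ≤ d_j − r_j, satisfying the agreeable-deadlines condition: for all i, j ∈ J, r_i ≤ r_j if and only if d_i ≤ d_j. Then among all feasible single-machine schedules minimizing the span, there exists one in which jobs start in order of their release times: r_i ≤ r_j implies s_i ≤ s_j. -/
/-!
Among schedules that already start in release order the span attains its minimum: after fixing
the start times outside `J`, they form a compact set on which the span is continuous. So it
suffices to turn any feasible schedule into one in release order without enlarging its busy set.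

While some job `i` starts after a job `j` released strictly later, let the shorter of the two start
where the longer one does: its interval then lies inside the longer one's, and agreeable deadlines
keep the move feasible. Performing the swap on the inverted pair with the smallest gap `s i - s j`,
and among those with the largest release difference `r j - r i`, creates no new inversion, so the
set of inverted pairs strictly shrinks. Finally, jobs with a common release time share their
deadline and can all start together with a longest one among them.
-/

open MeasureTheory Set Function Filter Topology

section Scheduling

variable {ι : Type*}

def IsFeasible (J : Finset ι) (r d p s : ι → ℝ) : Prop :=
  ∀ j ∈ J, r j ≤ s j ∧ s j + p j ≤ d j

def StartsInReleaseOrder (J : Finset ι) (r s : ι → ℝ) : Prop :=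
  ∀ i ∈ J, ∀ j ∈ J, r i ≤ r j → s i ≤ s j

def busySet (J : Finset ι) (p s : ι → ℝ) : Set ℝ :=
  ⋃ j ∈ J, Ico (s j) (s j + p j)

noncomputable def inversions (J : Finset ι) (r s : ι → ℝ) : Finset (ι × ι) :=
  (J ×ˢ J).filter fun q => r q.1 < r q.2 ∧ s q.2 < s q.1

variable {J : Finset ι} {r d p s : ι → ℝ}

lemma mem_inversions {i j : ι} :
    (i, j) ∈ inversions J r s ↔ (i ∈ J ∧ j ∈ J) ∧ r i < r j ∧ s j < s i := by
  simp [inversions]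

lemma inversions_eq_empty_iff :
    inversions J r s = ∅ ↔ ∀ i ∈ J, ∀ j ∈ J, r i < r j → s i ≤ s j := by
  simp only [inversions, Finset.filter_eq_empty_iff, Finset.mem_product, Prod.forall, not_and,
    not_lt]
  exact ⟨fun h i hi j hj => h i j ⟨hi, hj⟩, fun h i j hij => h i hij.1 j hij.2⟩

lemma IsFeasible.update [DecidableEq ι] (hs : IsFeasible J r d p s) {a : ι} {x : ℝ} (hr : r a ≤ x)
    (hd : x + p a ≤ d a) : IsFeasible J r d p (update s a x) := by
  intro j hj
  rcases eq_or_ne j a with rfl | hja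
  · simpa using ⟨hr, hd⟩
  · simpa [hja] using hs j hj

lemma busySet_update_subset [DecidableEq ι] {a b : ι} (hb : b ∈ J) (hab : p a ≤ p b) :
    busySet J p (update s a (s b)) ⊆ busySet J p s := by
  intro x hx
  simp only [busySet, mem_iUnion] at hx ⊢
  obtain ⟨j, hj, hx⟩ := hx
  rcases eq_or_ne j a with rfl | hja
  · rw [update_self] at hx
    exact ⟨b, hb, hx.1, hx.2.trans_le (by linarith)⟩
  · rw [update_of_ne hja] at hx
    exact ⟨j, hj, hx⟩

abbrev inversionKey (r s : ι → ℝ) (q : ι × ι) : ℝ ×ₗ ℝ :=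
  toLex (s q.1 - s q.2, r q.1 - r q.2)

lemma inversions_update_left_ssubset [DecidableEq ι] {i j : ι} (hij : (i, j) ∈ inversions J r s)
    (hmin : ∀ q ∈ inversions J r s, inversionKey r s (i, j) ≤ inversionKey r s q) :
    inversions J r (update s i (s j)) ⊂ inversions J r s := by
  obtain ⟨-, hr, hs⟩ := mem_inversions.1 hij
  have hji : j ≠ i := fun h => (h ▸ hr).false
  refine (Finset.ssubset_iff_of_subset ?_).2 ⟨(i, j), hij, ?_⟩
  · rintro ⟨a, b⟩ hab
    rw [mem_inversions] at hab ⊢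
    obtain ⟨hmem, hrab, hsab⟩ := hab
    refine ⟨hmem, hrab, ?_⟩
    rcases eq_or_ne a i with rfl | hai
    · have hba_ne : b ≠ a := fun h => (h ▸ hrab).false
      simp only [update_self, update_of_ne hba_ne] at hsab
      exact hsab.trans hs
    rcases eq_or_ne b i with rfl | hbi
    · simp only [update_self, update_of_ne hai] at hsab
      -- a job released before `i` and started in `(s j, s i]` would be inverted with `j`
      -- at a smaller key
      by_contra! hsa
      have hkey := hmin (a, j) (mem_inversions.2 ⟨⟨hmem.1, (mem_inversions.1 hij).1.2⟩,
        hrab.trans hr, hsab⟩)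
      exact (Prod.Lex.toLex_lt_toLex'.2
        ⟨by dsimp only; linarith, fun _ => by dsimp only; linarith⟩).not_ge hkey
    · simpa [update_of_ne hai, update_of_ne hbi] using hsab
  · simp [mem_inversions, update_of_ne hji]

lemma inversions_update_right_ssubset [DecidableEq ι] {i j : ι} (hij : (i, j) ∈ inversions J r s)
    (hmin : ∀ q ∈ inversions J r s, inversionKey r s (i, j) ≤ inversionKey r s q) :
    inversions J r (update s j (s i)) ⊂ inversions J r s := by
  obtain ⟨-, hr, hs⟩ := mem_inversions.1 hij
  have hij' : i ≠ j := fun h => (h ▸ hr).false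
  refine (Finset.ssubset_iff_of_subset ?_).2 ⟨(i, j), hij, ?_⟩
  · rintro ⟨a, b⟩ hab
    rw [mem_inversions] at hab ⊢
    obtain ⟨hmem, hrab, hsab⟩ := hab
    refine ⟨hmem, hrab, ?_⟩
    rcases eq_or_ne b j with rfl | hbj
    · have hab_ne : a ≠ b := fun h => (h ▸ hrab).false
      simp only [update_self, update_of_ne hab_ne] at hsab
      exact hs.trans hsab
    rcases eq_or_ne a j with rfl | haj
    · simp only [update_self, update_of_ne hbj] at hsab
      -- a job released after `j` and started in `[s j, s i)` would be inverted with `i`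
      -- at a smaller key
      by_contra! hsb
      have hkey := hmin (i, b) (mem_inversions.2 ⟨⟨(mem_inversions.1 hij).1.1, hmem.2⟩,
        hr.trans hrab, hsab⟩)
      exact (Prod.Lex.toLex_lt_toLex'.2
        ⟨by dsimp only; linarith, fun _ => by dsimp only; linarith⟩).not_ge hkey
    · simpa [update_of_ne haj, update_of_ne hbj] using hsab
  · simp [mem_inversions, update_of_ne hij']

lemma exists_inversions_ssubset (hagree : ∀ i ∈ J, ∀ j ∈ J, r i ≤ r j ↔ d i ≤ d j)
    (hs : IsFeasible J r d p s) (hne : (inversions J r s).Nonempty) :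
    ∃ s', IsFeasible J r d p s' ∧ inversions J r s' ⊂ inversions J r s ∧
      busySet J p s' ⊆ busySet J p s := by
  classical
  obtain ⟨⟨i, j⟩, hij, hmin⟩ := (inversions J r s).exists_min_image (inversionKey r s) hne
  obtain ⟨⟨hi, hj⟩, hr, hsji⟩ := mem_inversions.1 hij
  rcases le_or_gt (p i) (p j) with hp | hp
  · refine ⟨update s i (s j), hs.update ?_ ?_, inversions_update_left_ssubset hij hmin,
      busySet_update_subset hj hp⟩
    · linarith [(hs j hj).1]
    · linarith [(hs i hi).2]
  · refine ⟨update s j (s i), hs.update ?_ ?_, inversions_update_right_ssubset hij hmin,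
      busySet_update_subset hi hp.le⟩
    · linarith [(hs j hj).1]
    · linarith [(hs i hi).2, (hagree i hi j hj).1 hr.le]

theorem exists_inversions_eq_empty (hagree : ∀ i ∈ J, ∀ j ∈ J, r i ≤ r j ↔ d i ≤ d j)
    (s : ι → ℝ) (hs : IsFeasible J r d p s) :
    ∃ t, IsFeasible J r d p t ∧ inversions J r t = ∅ ∧ busySet J p t ⊆ busySet J p s := by
  obtain hne | hne := (inversions J r s).eq_empty_or_nonempty
  · exact ⟨s, hs, hne, subset_rfl⟩
  obtain ⟨s', hs', hlt, hsub⟩ := exists_inversions_ssubset hagree hs hne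
  obtain ⟨t, ht, hinv, htsub⟩ := exists_inversions_eq_empty hagree s' hs'
  exact ⟨t, ht, hinv, htsub.trans hsub⟩
termination_by (inversions J r s).card
decreasing_by exact Finset.card_lt_card hlt

lemma exists_startsInReleaseOrder_of_inversions_eq_empty
    (hagree : ∀ i ∈ J, ∀ j ∈ J, r i ≤ r j ↔ d i ≤ d j) (hs : IsFeasible J r d p s)
    (hinv : inversions J r s = ∅) :
    ∃ t, IsFeasible J r d p t ∧ StartsInReleaseOrder J r t ∧ busySet J p t ⊆ busySet J p s := by
  rcases isEmpty_or_nonempty ι with hι | hι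
  · exact ⟨s, hs, fun i => isEmptyElim i, subset_rfl⟩
  have hlongest : ∀ v ∈ J.image r, ∃ k ∈ J, r k = v ∧ ∀ j ∈ J, r j = v → p j ≤ p k := by
    intro v hv
    obtain ⟨j, hj, rfl⟩ := Finset.mem_image.1 hv
    obtain ⟨k, hk, hmax⟩ := (J.filter (r · = r j)).exists_max_image p ⟨j, by simpa using hj⟩
    rw [Finset.mem_filter] at hk
    exact ⟨k, hk.1, hk.2, fun j hj hjv => hmax j (Finset.mem_filter.2 ⟨hj, hjv⟩)⟩
  choose! lead hleadJ hleadr hleadp using hlongest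
  have hlead : ∀ j ∈ J, lead (r j) ∈ J ∧ r (lead (r j)) = r j ∧ p j ≤ p (lead (r j)) :=
    fun j hj => have hv := Finset.mem_image_of_mem r hj
      ⟨hleadJ _ hv, hleadr _ hv, hleadp _ hv j hj rfl⟩
  refine ⟨fun j => s (lead (r j)), fun j hj => ?_, fun i hi j hj hij => ?_, ?_⟩
  · obtain ⟨hk, hkr, hkp⟩ := hlead j hj
    have := (hagree _ hk j hj).1 hkr.le
    constructor <;> linarith [hs _ hk]
  · rcases hij.eq_or_lt with hij | hij
    · simp only [hij, le_refl]
    · refine inversions_eq_empty_iff.1 hinv _ (hlead i hi).1 _ (hlead j hj).1 ?_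
      rwa [(hlead i hi).2.1, (hlead j hj).2.1]
  · intro x hx
    simp only [busySet, mem_iUnion] at hx ⊢
    obtain ⟨j, hj, hx⟩ := hx
    obtain ⟨hk, -, hkp⟩ := hlead j hj
    exact ⟨_, hk, hx.1, hx.2.trans_le (by linarith)⟩

theorem exists_startsInReleaseOrder_busySet_subset
    (hagree : ∀ i ∈ J, ∀ j ∈ J, r i ≤ r j ↔ d i ≤ d j) (hs : IsFeasible J r d p s) :
    ∃ t, IsFeasible J r d p t ∧ StartsInReleaseOrder J r t ∧ busySet J p t ⊆ busySet J p s := by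
  obtain ⟨t, ht, hinv, hts⟩ := exists_inversions_eq_empty hagree s hs
  obtain ⟨u, hu, horder, hut⟩ := exists_startsInReleaseOrder_of_inversions_eq_empty hagree ht hinv
  exact ⟨u, hu, horder, hut.trans hts⟩

lemma volume_Ico_diff_Ico_le (a b q : ℝ) :
    volume (Ico a (a + q) \ Ico b (b + q)) ≤ ENNReal.ofReal |a - b| := by
  have hsub : Ico a (a + q) \ Ico b (b + q) ⊆ Ico a b ∪ Ico (b + q) (a + q) := by
    rintro x ⟨⟨h1, h2⟩, hx⟩
    rw [mem_Ico, not_and_or, not_le, not_lt] at hx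
    exact hx.imp (fun h => ⟨h1, h⟩) (fun h => ⟨h, h2⟩)
  refine (measure_mono hsub).trans ((measure_union_le _ _).trans ?_)
  rw [Real.volume_Ico, Real.volume_Ico]
  rcases le_total a b with h | h
  · rw [ENNReal.ofReal_of_nonpos (by linarith : a + q - (b + q) ≤ 0), add_zero, abs_sub_comm]
    exact ENNReal.ofReal_le_ofReal (by linarith [le_abs_self (b - a)])
  · rw [ENNReal.ofReal_of_nonpos (by linarith : b - a ≤ 0), zero_add]
    exact ENNReal.ofReal_le_ofReal (by linarith [le_abs_self (a - b)])

variable (J p) in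
lemma volume_busySet_le (s t : ι → ℝ) :
    volume (busySet J p s) ≤ volume (busySet J p t) + ∑ j ∈ J, ENNReal.ofReal |s j - t j| := by
  have hsub : busySet J p s ⊆
      busySet J p t ∪ ⋃ j ∈ J, (Ico (s j) (s j + p j) \ Ico (t j) (t j + p j)) := by
    intro x hx
    simp only [busySet, mem_iUnion, mem_union, Set.mem_sdiff] at hx ⊢
    obtain ⟨j, hj, hxj⟩ := hx
    by_cases hxt : x ∈ Ico (t j) (t j + p j)
    · exact Or.inl ⟨j, hj, hxt⟩
    · exact Or.inr ⟨j, hj, hxj, hxt⟩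
  refine (measure_mono hsub).trans ((measure_union_le _ _).trans ?_)
  gcongr
  exact (measure_biUnion_finset_le _ _).trans
    (Finset.sum_le_sum fun j _ => volume_Ico_diff_Ico_le _ _ _)

lemma volume_busySet_ne_top : volume (busySet J p s) ≠ ⊤ := by
  refine ne_top_of_le_ne_top ?_ (measure_biUnion_finset_le J _)
  simp [Real.volume_Ico]

variable (J p) in
lemma continuous_volume_busySet : Continuous fun s : ι → ℝ => volume (busySet J p s) := by
  refine continuous_iff_continuousAt.2 fun t => ?_
  have hdist : Tendsto (fun s : ι → ℝ => ∑ j ∈ J, ENNReal.ofReal |s j - t j|) (𝓝 t) (𝓝 0) := by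
    have : Continuous fun s : ι → ℝ => ∑ j ∈ J, ENNReal.ofReal |s j - t j| :=
      continuous_finsetSum _ fun j _ =>
        ENNReal.continuous_ofReal.comp ((continuous_apply j).sub continuous_const).abs
    simpa using this.tendsto t
  refine (ENNReal.tendsto_nhds volume_busySet_ne_top).2 fun ε hε => ?_
  filter_upwards [ENNReal.tendsto_nhds_zero.1 hdist ε hε] with s hs
  have hs' : ∑ j ∈ J, ENNReal.ofReal |t j - s j| ≤ ε := by simpa only [abs_sub_comm] using hs
  exact ⟨tsub_le_iff_right.2 ((volume_busySet_le J p t s).trans (by gcongr)),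
    (volume_busySet_le J p s t).trans (by gcongr)⟩

lemma busySet_piecewise [DecidableEq ι] (u : ι → ℝ) :
    busySet J p (J.piecewise s u) = busySet J p s :=
  iUnion₂_congr fun j hj => by rw [J.piecewise_eq_of_mem _ _ hj]

-- Normalizing start times to `0` outside `J` confines schedules to a compact box.
theorem exists_startsInReleaseOrder_isMinOn (hflex : ∀ j ∈ J, p j ≤ d j - r j) :
    ∃ s, IsFeasible J r d p s ∧ StartsInReleaseOrder J r s ∧
      ∀ t, IsFeasible J r d p t → StartsInReleaseOrder J r t →
        volume (busySet J p s) ≤ volume (busySet J p t) := by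
  classical
  set K : Set (ι → ℝ) := univ.pi fun j => if j ∈ J then Icc (r j) (d j - p j) else {0}
  have hK : IsCompact K := isCompact_univ_pi fun j => by
    split_ifs
    exacts [isCompact_Icc, isCompact_singleton]
  have hC : IsClosed {s : ι → ℝ | StartsInReleaseOrder J r s} := by
    simp only [StartsInReleaseOrder, ofPred_forall]
    exact isClosed_iInter fun i => isClosed_iInter fun _ => isClosed_iInter fun j =>
      isClosed_iInter fun _ => isClosed_iInter fun _ =>
        isClosed_le (continuous_apply i) (continuous_apply j)
  have hnormalize : ∀ t, IsFeasible J r d p t → StartsInReleaseOrder J r t →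
      J.piecewise t 0 ∈ K ∩ {s | StartsInReleaseOrder J r s} := by
    refine fun t ht hto => ⟨fun j _ => ?_, fun i hi j hj hij => ?_⟩
    · by_cases hj : j ∈ J
      · simpa [hj, le_sub_iff_add_le] using ht j hj
      · simp [hj]
    · simpa [hi, hj] using hto i hi j hj hij
  obtain ⟨s, ⟨hsK, hsC⟩, hmin⟩ := (hK.inter_right hC).exists_isMinOn
    ⟨_, hnormalize r (fun j hj => ⟨le_rfl, by linarith [hflex j hj]⟩) fun _ _ _ _ => id⟩
    (continuous_volume_busySet J p).continuousOn
  refine ⟨s, fun j hj => ?_, hsC, fun t ht hto => ?_⟩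
  · simpa [K, hj, le_sub_iff_add_le] using hsK j (mem_univ j)
  · rw [← busySet_piecewise (s := t) (u := 0)]
    exact hmin (hnormalize t ht hto)

end Scheduling

theorem stmt_6_general {ι : Type*} (J : Finset ι) (r d p : ι → ℝ)
    (hflex : ∀ j ∈ J, p j ≤ d j - r j)
    (hagree : ∀ i ∈ J, ∀ j ∈ J, r i ≤ r j ↔ d i ≤ d j) :
    ∃ s : ι → ℝ,
      (∀ j ∈ J, r j ≤ s j ∧ s j + p j ≤ d j) ∧
      (∀ s' : ι → ℝ, (∀ j ∈ J, r j ≤ s' j ∧ s' j + p j ≤ d j) →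
        volume (⋃ j ∈ J, Set.Ico (s j) (s j + p j)) ≤
          volume (⋃ j ∈ J, Set.Ico (s' j) (s' j + p j))) ∧
      (∀ i ∈ J, ∀ j ∈ J, r i ≤ r j → s i ≤ s j) := by
  obtain ⟨s, hs, horder, hmin⟩ := exists_startsInReleaseOrder_isMinOn hflex
  refine ⟨s, hs, fun s' hs' => ?_, horder⟩
  obtain ⟨t, ht, htorder, hsub⟩ := exists_startsInReleaseOrder_busySet_subset hagree hs'
  exact (hmin t ht htorder).trans (measure_mono hsub)

/-- For flexible jobs with agreeable deadlines, there is a feasible single-machine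
schedule minimizing the span in which jobs start in order of their release times. -/
theorem stmt_6 {ι : Type*} (J : Finset ι) (r d p : ι → ℝ)
    (hp : ∀ j ∈ J, 0 < p j) (hflex : ∀ j ∈ J, p j ≤ d j - r j)
    (hagree : ∀ i ∈ J, ∀ j ∈ J, r i ≤ r j ↔ d i ≤ d j) :
    ∃ s : ι → ℝ,
      (∀ j ∈ J, r j ≤ s j ∧ s j + p j ≤ d j) ∧
      (∀ s' : ι → ℝ, (∀ j ∈ J, r j ≤ s' j ∧ s' j + p j ≤ d j) →
        volume (⋃ j ∈ J, Set.Ico (s j) (s j + p j)) ≤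
          volume (⋃ j ∈ J, Set.Ico (s' j) (s' j + p j))) ∧
      (∀ i ∈ J, ∀ j ∈ J, r i ≤ r j → s i ≤ s j) :=
  stmt_6_general J r d p hflex hagree
end

section
/- Let f_1, ..., f_m be 'flag jobs' with start times s_{f_i} = d_{f_i} − p_{f_i} (each started at its latest feasible start) and pairwise disjoint intervals [s_{f_i}, d_{f_i}). Suppose f_i, ..., f_j (i < j) all lie inside one connected component C* = [a, b) of an optimal schedule, and additionally for each consecutive pair the later flag was released after the earlier flag's deadline: d_{f_{t}} < r_{f_{t+1}} for i ≤ t < j. Then [s_{f_i}, d_{f_{j-1}}) ⊆ [a, b), i.e., a ≤ s_{f_i} and d_{f_{j-1}} ≤ b. -/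
/-- Flag jobs `f_i, ..., f_j` with latest-feasible starts `s t = d t − p t`, each placed
in an optimal schedule inside a component `[a, b)`, with `d t < r (t+1)` for consecutive
flags.  Then `a ≤ d i − p i` and `d (j-1) ≤ b`. -/
theorem stmt_8 (r d p σ : ℕ → ℝ) (a b : ℝ) (i j : ℕ) (hij : i < j)
    (hp : ∀ t, i ≤ t → t ≤ j → 0 < p t)
    (hfeas : ∀ t, i ≤ t → t ≤ j → r t ≤ σ t ∧ σ t + p t ≤ d t)
    (hin : ∀ t, i ≤ t → t ≤ j → Set.Ico (σ t) (σ t + p t) ⊆ Set.Ico a b)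
    (hgap : ∀ t, i ≤ t → t < j → d t < r (t + 1)) :
    a ≤ d i - p i ∧ d (j - 1) ≤ b := by
  have hile : i ≤ j := hij.le
  have hpi := hp i le_rfl hile
  have hmi := hin i le_rfl hile ⟨le_rfl, by linarith⟩
  have hfi := hfeas i le_rfl hile
  constructor
  · linarith [hmi.1, hfi.2]
  · have hj1 : i ≤ j - 1 := Nat.le_sub_one_of_lt hij
    have hj1' : j - 1 < j := Nat.sub_lt (Nat.zero_lt_of_lt hij) one_pos
    have hg := hgap (j - 1) hj1 hj1'
    rw [Nat.sub_add_cancel (Nat.one_le_of_lt hij)] at hg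
    have hfj := hfeas j hile le_rfl
    have hpj := hp j hile le_rfl
    have hmj := hin j hile le_rfl ⟨le_rfl, by linarith⟩
    linarith [hmj.2, hfj.1]
end

section
/- Let α = √2 − 1. Then for all s ∈ [0, α], (3 + s)/(2 + s) ≥ 1 + α = √2, and for all β ∈ [0, 1], min(1 + β, (3 + β)/(2 + β)) ≤ √2, with equality iff β = √2 − 1. -/
/-- With `α = √2 − 1`: for all `s ∈ [0, α]`, `(3+s)/(2+s) ≥ 1 + α = √2`; and for all
`β ∈ [0,1]`, `min (1+β) ((3+β)/(2+β)) ≤ √2`, with equality iff `β = √2 − 1`. -/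
theorem stmt_10 :
    (∀ s : ℝ, 0 ≤ s → s ≤ Real.sqrt 2 - 1 →
      Real.sqrt 2 ≤ (3 + s) / (2 + s)) ∧
    (1 + (Real.sqrt 2 - 1) = Real.sqrt 2) ∧
    (∀ β : ℝ, 0 ≤ β → β ≤ 1 →
      (min (1 + β) ((3 + β) / (2 + β)) ≤ Real.sqrt 2 ∧
        (min (1 + β) ((3 + β) / (2 + β)) = Real.sqrt 2 ↔ β = Real.sqrt 2 - 1))) := by
  have h2 : Real.sqrt 2 ^ 2 = 2 := Real.sq_sqrt (by norm_num)
  have h1 : (1:ℝ) < Real.sqrt 2 := by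
    nlinarith [Real.sqrt_nonneg 2]
  refine ⟨?_, by ring, ?_⟩
  · intro s hs0 hs
    rw [le_div_iff₀ (by linarith)]
    nlinarith
  · intro β hβ0 hβ1
    have hden : (0:ℝ) < 2 + β := by linarith
    constructor
    · rcases le_or_gt β (Real.sqrt 2 - 1) with h | h
      · exact le_trans (min_le_left _ _) (by linarith)
      · refine le_trans (min_le_right _ _) ?_
        rw [div_le_iff₀ hden]
        nlinarith
    · constructor
      · intro hmin
        rcases le_or_gt β (Real.sqrt 2 - 1) with h | h
        · have : min (1 + β) ((3 + β) / (2 + β)) ≤ 1 + β := min_le_left _ _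
          linarith
        · have hlt : (3 + β) / (2 + β) < Real.sqrt 2 := by
            rw [div_lt_iff₀ hden]; nlinarith
          have : min (1 + β) ((3 + β) / (2 + β)) ≤ (3 + β) / (2 + β) :=
            min_le_right _ _
          linarith
      · intro h; subst h
        have : (3 + (Real.sqrt 2 - 1)) / (2 + (Real.sqrt 2 - 1)) = Real.sqrt 2 := by
          rw [div_eq_iff (by nlinarith)]; nlinarith
        rw [this]
        simp
end

section
/- Let T be a finite set of half-open unit intervals [s_j, s_j + 1) on the real line with total union measure M (the optimal busy time over possibly several machines). Then there exists a set of pairwise disjoint unit intervals I_1, ..., I_k with k ≤ M such that every interval [s_j, s_j+1) has its left endpoint s_j contained in some I_i. -/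
open MeasureTheory ENNReal

/- Greedy choice: take the leftmost start `m`, use the window `[m, m + 1)` for all starts in it,
and recurse on the starts `≥ m + 1`. The chosen windows are disjoint subintervals of the union,
so their number is at most its measure. -/

lemma Finset.exists_subset_pairwiseDisjoint_Ico_covering (T : Finset ℝ) :
    ∃ S ⊆ T, (S : Set ℝ).PairwiseDisjoint (fun s ↦ Set.Ico s (s + 1)) ∧
      ∀ x ∈ T, ∃ s ∈ S, x ∈ Set.Ico s (s + 1) := by
  induction T using Finset.strongInduction with
  | H T ih =>
    rcases T.eq_empty_or_nonempty with rfl | hne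
    · exact ⟨∅, subset_rfl, by simp, by simp⟩
    set m := T.min' hne
    have hmT : m ∈ T := T.min'_mem hne
    have hlt : T.filter (m + 1 ≤ ·) ⊂ T :=
      Finset.filter_ssubset.mpr ⟨m, hmT, by linarith⟩
    obtain ⟨S, hST, hdisj, hcov⟩ := ih _ hlt
    have hS : ∀ s ∈ S, m + 1 ≤ s := fun s hs ↦ (Finset.mem_filter.mp (hST hs)).2
    refine ⟨insert m S, Finset.insert_subset hmT (hST.trans hlt.subset), ?_, ?_⟩
    · rw [Finset.coe_insert, Set.pairwiseDisjoint_insert]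
      exact ⟨hdisj, fun s hs _ ↦
        Set.Ico_disjoint_Ico_same.mono_right (Set.Ico_subset_Ico_left (hS s hs))⟩
    · intro x hx
      by_cases h : m + 1 ≤ x
      · obtain ⟨s, hs, hxs⟩ := hcov x (Finset.mem_filter.mpr ⟨hx, h⟩)
        exact ⟨s, Finset.mem_insert_of_mem hs, hxs⟩
      · exact ⟨m, Finset.mem_insert_self m S, T.min'_le x hx, not_le.mp h⟩

lemma Finset.card_le_volume_biUnion_Ico {S T : Finset ℝ} (hST : S ⊆ T)
    (hdisj : (S : Set ℝ).PairwiseDisjoint (fun s ↦ Set.Ico s (s + 1))) :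
    (S.card : ℝ≥0∞) ≤ volume (⋃ x ∈ T, Set.Ico x (x + 1)) :=
  calc (S.card : ℝ≥0∞) = volume (⋃ s ∈ S, Set.Ico s (s + 1)) := by
        rw [measure_biUnion_finset hdisj fun _ _ ↦ measurableSet_Ico]
        simp
    _ ≤ volume (⋃ x ∈ T, Set.Ico x (x + 1)) :=
        measure_mono (Set.biUnion_subset_biUnion_left hST)

/-- Given finitely many unit intervals `[x, x+1)` (starts `x ∈ T`) whose union has
measure `M`, there are `k ≤ M` pairwise disjoint unit intervals covering all starts. -/
theorem stmt_12 (T : Finset ℝ) :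
    ∃ (k : ℕ) (I : Fin k → ℝ),
      (∀ i j : Fin k, i ≠ j →
        Disjoint (Set.Ico (I i) (I i + 1)) (Set.Ico (I j) (I j + 1))) ∧
      (k : ℝ≥0∞) ≤ volume (⋃ x ∈ T, Set.Ico x (x + 1)) ∧
      (∀ x ∈ T, ∃ i : Fin k, x ∈ Set.Ico (I i) (I i + 1)) := by
  obtain ⟨S, hST, hdisj, hcov⟩ := T.exists_subset_pairwiseDisjoint_Ico_covering
  let e := S.equivFin
  refine ⟨S.card, fun i ↦ e.symm i, fun i j hij ↦ ?_, S.card_le_volume_biUnion_Ico hST hdisj,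
    fun x hx ↦ ?_⟩
  · exact hdisj (e.symm i).2 (e.symm j).2 (Subtype.coe_injective.ne (e.symm.injective.ne hij))
  · obtain ⟨s, hs, hxs⟩ := hcov x hx
    exact ⟨e ⟨s, hs⟩, by simpa using hxs⟩
end
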